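/- arXiv:2108.06823 — 2 statements merged into one kernel-verified Lean document; each statement's English description precedes it below -/
import Mathlib

section
/- (Corollary: constant angle) Let S ⊆ D be any set, ε ∈ {−1,1}, and N_L : S → ℝ³ a map such that at every p ∈ S one has g_L(p)(N_L(p), N_L(p)) = ε and g_L(p)(N_L(p), ξ) ≤ 0; define ω_L(p) = √(ε + 2 g_L(p)(N_L(p), ξ)²) and N_R(p) = (1/ω_L(p))(√(2(ω_L(p)² − ε)) ξ − N_L(p)). Then the function p ↦ g_L(p)(N_L(p), ξ) is constant on S if and only if the function p ↦ g_R(p)(N_R(p), ξ) is constant on S. -/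
noncomputable section

open Real

/-- Points/vectors of `ℝ³`. -/
abbrev V3 : Type := ℝ × ℝ × ℝ

/-- The domain `D`: all of `ℝ³` if `κ ≥ 0`, the solid cylinder
`{x² + y² < -4/κ}` if `κ < 0`. -/
def Dset (κ : ℝ) : Set V3 := {p | κ < 0 → p.1 ^ 2 + p.2.1 ^ 2 < -4 / κ}

/-- The conformal factor `λ`. -/
def lam (κ : ℝ) (p : V3) : ℝ := 1 / (1 + κ / 4 * (p.1 ^ 2 + p.2.1 ^ 2))

/-- The Riemannian BCV metric `g_R` at the point `p`, evaluated on vectors `u, v`. -/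
def gR (κ τ : ℝ) (p u v : V3) : ℝ :=
  (lam κ p) ^ 2 * (u.1 * v.1 + u.2.1 * v.2.1) +
    (u.2.2 + τ * lam κ p * (p.2.1 * u.1 - p.1 * u.2.1)) *
      (v.2.2 + τ * lam κ p * (p.2.1 * v.1 - p.1 * v.2.1))

/-- The Lorentzian BCV metric `g_L` at the point `p`, evaluated on vectors `u, v`. -/
def gL (κ τ : ℝ) (p u v : V3) : ℝ :=
  (lam κ p) ^ 2 * (u.1 * v.1 + u.2.1 * v.2.1) -
    (u.2.2 + τ * lam κ p * (p.2.1 * u.1 - p.1 * u.2.1)) *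
      (v.2.2 + τ * lam κ p * (p.2.1 * v.1 - p.1 * v.2.1))

/-- The frame field `E₁` (with `σ = κ/(2τ)`). -/
def E1 (κ τ : ℝ) (p : V3) : V3 :=
  ((lam κ p)⁻¹ * cos (κ / (2 * τ) * p.2.2),
   (lam κ p)⁻¹ * sin (κ / (2 * τ) * p.2.2),
   τ * (p.1 * sin (κ / (2 * τ) * p.2.2) - p.2.1 * cos (κ / (2 * τ) * p.2.2)))

/-- The frame field `E₂` (with `σ = κ/(2τ)`). -/
def E2 (κ τ : ℝ) (p : V3) : V3 :=
  (-((lam κ p)⁻¹ * sin (κ / (2 * τ) * p.2.2)),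
   (lam κ p)⁻¹ * cos (κ / (2 * τ) * p.2.2),
   τ * (p.1 * cos (κ / (2 * τ) * p.2.2) + p.2.1 * sin (κ / (2 * τ) * p.2.2)))

/-- The (constant) frame field `E₃ = ∂_z`. -/
def E3 : V3 := (0, 0, 1)

/-- The Killing field `ξ = E₃`. -/
def xi : V3 := E3

/-- First coefficient of a vector in the frame `{E₁,E₂,E₃}` (extracted with `g_R`;
the frame is `g_R`-orthonormal on `D`). -/
def c1 (κ τ : ℝ) (p : V3) (u : V3) : ℝ := gR κ τ p u (E1 κ τ p)

/-- Second frame coefficient. -/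
def c2 (κ τ : ℝ) (p : V3) (u : V3) : ℝ := gR κ τ p u (E2 κ τ p)

/-- Third frame coefficient. -/
def c3 (κ τ : ℝ) (p : V3) (u : V3) : ℝ := gR κ τ p u E3

/-- The Riemannian cross product `u ∧_R v` at `p`. -/
def wedgeR (κ τ : ℝ) (p : V3) (u v : V3) : V3 :=
  (c2 κ τ p u * c3 κ τ p v - c3 κ τ p u * c2 κ τ p v) • E1 κ τ p
    - (c1 κ τ p u * c3 κ τ p v - c3 κ τ p u * c1 κ τ p v) • E2 κ τ p
    + (c1 κ τ p u * c2 κ τ p v - c2 κ τ p u * c1 κ τ p v) • E3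

/-- The Lorentzian cross product `u ∧_L v` at `p`. -/
def wedgeL (κ τ : ℝ) (p : V3) (u v : V3) : V3 :=
  (c2 κ τ p u * c3 κ τ p v - c3 κ τ p u * c2 κ τ p v) • E1 κ τ p
    - (c1 κ τ p u * c3 κ τ p v - c3 κ τ p u * c1 κ τ p v) • E2 κ τ p
    - (c1 κ τ p u * c2 κ τ p v - c2 κ τ p u * c1 κ τ p v) • E3

/-- The Lie bracket of vector fields on (an open subset of) `ℝ³`:
`[X,Y](p) = DY(p)(X(p)) − DX(p)(Y(p))`. -/
def lie (X Y : V3 → V3) (p : V3) : V3 :=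
  fderiv ℝ Y p (X p) - fderiv ℝ X p (Y p)

/-- The explicit connection `∇ᴿ` of `𝔼³(κ,τ)`. -/
def nablaR (κ τ : ℝ) (X Y : V3 → V3) (p : V3) : V3 :=
  (fderiv ℝ (fun q => c1 κ τ q (Y q)) p (X p)) • E1 κ τ p
    + (fderiv ℝ (fun q => c2 κ τ q (Y q)) p (X p)) • E2 κ τ p
    + (fderiv ℝ (fun q => c3 κ τ q (Y q)) p (X p)) • E3
    + (τ * c2 κ τ p (X p) * c3 κ τ p (Y p)) • E1 κ τ p
    - (τ * c1 κ τ p (X p) * c3 κ τ p (Y p)) • E2 κ τ p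
    + (τ * (c1 κ τ p (X p) * c2 κ τ p (Y p) - c2 κ τ p (X p) * c1 κ τ p (Y p))) • E3
    + ((κ - 2 * τ ^ 2) / (2 * τ) * (c3 κ τ p (X p) * c1 κ τ p (Y p))) • E2 κ τ p
    - ((κ - 2 * τ ^ 2) / (2 * τ) * (c3 κ τ p (X p) * c2 κ τ p (Y p))) • E1 κ τ p

/-- The explicit connection `∇ᴸ` of `𝕃³(κ,τ)`. -/
def nablaL (κ τ : ℝ) (X Y : V3 → V3) (p : V3) : V3 :=
  (fderiv ℝ (fun q => c1 κ τ q (Y q)) p (X p)) • E1 κ τ p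
    + (fderiv ℝ (fun q => c2 κ τ q (Y q)) p (X p)) • E2 κ τ p
    + (fderiv ℝ (fun q => c3 κ τ q (Y q)) p (X p)) • E3
    - (τ * c2 κ τ p (X p) * c3 κ τ p (Y p)) • E1 κ τ p
    + (τ * c1 κ τ p (X p) * c3 κ τ p (Y p)) • E2 κ τ p
    + (τ * (c1 κ τ p (X p) * c2 κ τ p (Y p) - c2 κ τ p (X p) * c1 κ τ p (Y p))) • E3
    + ((κ + 2 * τ ^ 2) / (2 * τ) * (c3 κ τ p (X p) * c1 κ τ p (Y p))) • E2 κ τ p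
    - ((κ + 2 * τ ^ 2) / (2 * τ) * (c3 κ τ p (X p) * c2 κ τ p (Y p))) • E1 κ τ p

/-- `ω_L = √(ε + 2 g_L(N, ξ)²)`. -/
def omegaL (κ τ ε : ℝ) (p : V3) (N : V3) : ℝ :=
  Real.sqrt (ε + 2 * (gL κ τ p N xi) ^ 2)

/-- `ω_R = 1/ω_L`. -/
def omegaR (κ τ ε : ℝ) (p : V3) (N : V3) : ℝ := 1 / omegaL κ τ ε p N

/-- The Riemannian unit normal `N_R = (1/ω_L)(√(2(ω_L² − ε)) ξ − N_L)`. -/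
def NRof (κ τ ε : ℝ) (p : V3) (N : V3) : V3 :=
  (1 / omegaL κ τ ε p N) • (Real.sqrt (2 * ((omegaL κ τ ε p N) ^ 2 - ε)) • xi - N)

/-- `g_L(p)(n, ·)` as a linear form. -/
def gLlin (κ τ : ℝ) (p n : V3) : V3 →ₗ[ℝ] ℝ where
  toFun v := gL κ τ p n v
  map_add' v w := by
    simp only [gL, Prod.fst_add, Prod.snd_add]
    ring
  map_smul' r v := by
    simp only [gL, Prod.smul_fst, Prod.smul_snd, smul_eq_mul, RingHom.id_apply]
    ring

/-- The tangent plane at `p` determined by the normal `n`: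
`P_p = {v : g_L(n,v) = 0}`. -/
def Pp (κ τ : ℝ) (p n : V3) : Submodule ℝ V3 := LinearMap.ker (gLlin κ τ p n)

/-- The Lorentzian shape operator `A_L v = −∇ᴸ_v N_L`. -/
def AL (κ τ : ℝ) (NL : V3 → V3) (p : V3) (v : V3) : V3 :=
  -(nablaL κ τ (fun _ => v) NL p)

/-- The Riemannian shape operator `A_R v = −∇ᴿ_v N_R`. -/
def AR (κ τ ε : ℝ) (NL : V3 → V3) (p : V3) (v : V3) : V3 :=
  -(nablaR κ τ (fun _ => v) (fun q => NRof κ τ ε q (NL q)) p)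

/-- The tangential part `T_L = ξ − ε g_L(N_L, ξ) N_L`. -/
def TLof (κ τ ε : ℝ) (p : V3) (N : V3) : V3 := xi - (ε * gL κ τ p N xi) • N

/-- The tangential part `T_R = ξ − g_R(N_R, ξ) N_R`. -/
def TRof (κ τ ε : ℝ) (p : V3) (N : V3) : V3 :=
  xi - (gR κ τ p (NRof κ τ ε p N) xi) • NRof κ τ ε p N

/-- The rotation `J_L v = N_L ∧_L v`. -/
def JL (κ τ : ℝ) (p : V3) (N : V3) (v : V3) : V3 := wedgeL κ τ p N v

/-- The rotation `J_R v = N_R ∧_R v`. -/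
def JR (κ τ : ℝ) (p : V3) (N : V3) (v : V3) : V3 := wedgeR κ τ p N v

/-!
Since `ξ = ∂_z`, the forms `g_R(·, ξ)` and `-g_L(·, ξ)` coincide, and for `ν = g_L(N_L, ξ) ≤ 0`
the coefficient `√(2(ω_L² − ε)) = √(4ν²)` of `ξ` in `N_R` is `-2ν`. Hence
`g_R(N_R, ξ) = -ν / √(ε + 2ν²)`, and for `ε ≠ 0` this is an injective function of `ν ≤ 0`
(its square `ν² / (ε + 2ν²)` determines `ν²`). So one angle function is constant exactly when
the other one is.
-/

section Metric

variable (κ τ : ℝ) (p : V3)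

lemma gL_comm (u v : V3) : gL κ τ p u v = gL κ τ p v u := by
  simp only [gL]
  ring

lemma gR_xi_eq_neg_gL_xi (u : V3) : gR κ τ p u xi = -gL κ τ p u xi := by
  simp only [gR, gL, xi, E3]
  ring

lemma gL_xi_xi : gL κ τ p xi xi = -1 := by
  simp only [gL, xi, E3]
  ring

lemma gL_self_add_sq_gL_xi (u : V3) :
    gL κ τ p u u + gL κ τ p u xi ^ 2 = lam κ p ^ 2 * (u.1 ^ 2 + u.2.1 ^ 2) := by
  simp only [gL, xi, E3]
  ring

lemma sign_add_two_mul_sq_gL_xi_pos {ε : ℝ} (hε : ε = -1 ∨ ε = 1) {N : V3}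
    (hN : gL κ τ p N N = ε) : 0 < ε + 2 * gL κ τ p N xi ^ 2 := by
  have hhor : 0 ≤ ε + gL κ τ p N xi ^ 2 := by
    rw [← hN, gL_self_add_sq_gL_xi]
    positivity
  rcases hε with rfl | rfl <;> nlinarith

lemma gR_NRof_xi (ε : ℝ) {N : V3} (hν : gL κ τ p N xi ≤ 0)
    (hpos : 0 < ε + 2 * gL κ τ p N xi ^ 2) :
    gR κ τ p (NRof κ τ ε p N) xi =
      -gL κ τ p N xi / √(ε + 2 * gL κ τ p N xi ^ 2) := by
  set ν := gL κ τ p N xi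
  have hcoef : √(2 * (omegaL κ τ ε p N ^ 2 - ε)) = -2 * ν := by
    rw [omegaL, sq_sqrt hpos.le, show 2 * (ε + 2 * ν ^ 2 - ε) = (-2 * ν) ^ 2 by ring,
      sqrt_sq (by linarith)]
  have hlin : gL κ τ p (NRof κ τ ε p N) xi =
      (1 / omegaL κ τ ε p N) * (√(2 * (omegaL κ τ ε p N ^ 2 - ε)) * gL κ τ p xi xi - ν) := by
    rw [gL_comm, show ν = gL κ τ p xi N from gL_comm ..]
    change gLlin κ τ p xi (NRof κ τ ε p N) = _
    simp only [NRof, map_smul, map_sub, smul_eq_mul]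
    rfl
  rw [gR_xi_eq_neg_gL_xi, hlin, hcoef, gL_xi_xi, omegaL]
  ring

end Metric

lemma injOn_neg_div_sqrt_add_two_mul_sq {ε : ℝ} (hε : ε ≠ 0) :
    Set.InjOn (fun a : ℝ => -a / √(ε + 2 * a ^ 2)) {a | a ≤ 0 ∧ 0 < ε + 2 * a ^ 2} := by
  rintro a ⟨ha, hA⟩ b ⟨hb, hB⟩ h
  have hsq : a ^ 2 / (ε + 2 * a ^ 2) = b ^ 2 / (ε + 2 * b ^ 2) := by
    have h2 := congrArg (· ^ 2) h
    simp only at h2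
    rwa [div_pow, div_pow, neg_sq, neg_sq, sq_sqrt hA.le, sq_sqrt hB.le] at h2
  rw [div_eq_div_iff hA.ne' hB.ne'] at hsq
  have hab : a ^ 2 = b ^ 2 := mul_left_cancel₀ hε (by linear_combination hsq)
  nlinarith [sq_nonneg (a - b), sq_nonneg (a + b)]

lemma exists_forall_eq_iff_of_injOn {α β γ : Type*} [Nonempty β] {S : Set α} {T : Set β}
    {f : α → β} {g : α → γ} {φ : β → γ} (hφ : Set.InjOn φ T) (hf : Set.MapsTo f S T)
    (hg : ∀ p ∈ S, g p = φ (f p)) :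
    (∃ c, ∀ p ∈ S, f p = c) ↔ ∃ c, ∀ p ∈ S, g p = c := by
  constructor
  · rintro ⟨c, hc⟩
    exact ⟨φ c, fun p hp => by rw [hg p hp, hc p hp]⟩
  · rintro ⟨c, hc⟩
    rcases S.eq_empty_or_nonempty with rfl | ⟨p₀, hp₀⟩
    · exact ⟨Classical.arbitrary β, by simp⟩
    · refine ⟨f p₀, fun p hp => hφ (hf hp) (hf hp₀) ?_⟩
      rw [← hg p hp, ← hg p₀ hp₀, hc p hp, hc p₀ hp₀]

theorem constant_angle_general (κ τ : ℝ) (ε : ℝ) (hε : ε = -1 ∨ ε = 1)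
    (S : Set V3) (NL : V3 → V3)
    (hNL : ∀ p ∈ S, gL κ τ p (NL p) (NL p) = ε)
    (hle : ∀ p ∈ S, gL κ τ p (NL p) xi ≤ 0) :
    (∃ c : ℝ, ∀ p ∈ S, gL κ τ p (NL p) xi = c) ↔
      (∃ c : ℝ, ∀ p ∈ S, gR κ τ p (NRof κ τ ε p (NL p)) xi = c) := by
  have hpos (p : V3) (hp : p ∈ S) : 0 < ε + 2 * gL κ τ p (NL p) xi ^ 2 :=
    sign_add_two_mul_sq_gL_xi_pos κ τ p hε (hNL p hp)
  have hε0 : ε ≠ 0 := by rcases hε with rfl | rfl <;> norm_num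
  exact exists_forall_eq_iff_of_injOn (injOn_neg_div_sqrt_add_two_mul_sq hε0)
    (fun p hp => ⟨hle p hp, hpos p hp⟩)
    (fun p hp => gR_NRof_xi κ τ p ε (hle p hp) (hpos p hp))

/-- constant angle: `g_L(N_L, ξ)` is constant on `S` iff
`g_R(N_R, ξ)` is constant on `S`. -/
theorem constant_angle (κ τ : ℝ) (hτ : τ ≠ 0) (ε : ℝ) (hε : ε = -1 ∨ ε = 1)
    (S : Set V3) (hS : S ⊆ Dset κ) (NL : V3 → V3)
    (hNL : ∀ p ∈ S, gL κ τ p (NL p) (NL p) = ε)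
    (hle : ∀ p ∈ S, gL κ τ p (NL p) xi ≤ 0) :
    (∃ c : ℝ, ∀ p ∈ S, gL κ τ p (NL p) xi = c) ↔
      (∃ c : ℝ, ∀ p ∈ S, gR κ τ p (NRof κ τ ε p (NL p)) xi = c) :=
  constant_angle_general κ τ ε hε S NL hNL hle

end
end

section
/- (Curvature tensor of the Lorentzian BCV space, eq. (5.2.1)) For all smooth vector fields X, Y, Z on D one has, at every point, ∇ᴸ_{[X,Y]} Z − ∇ᴸ_X(∇ᴸ_Y Z) + ∇ᴸ_Y(∇ᴸ_X Z) = (κ + 3τ²)( g_L(X,Z) Y − g_L(Y,Z) X ) − (κ + 4τ²) g_L(Z,ξ)( g_L(Y,ξ) X − g_L(X,ξ) Y ) − (κ + 4τ²)( g_L(Y,Z) g_L(X,ξ) − g_L(X,Z) g_L(Y,ξ) ) ξ, where [X,Y] denotes the Lie bracket of vector fields. -/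
noncomputable section

open Real

/-! ### Auxiliary material for the proof of `curvature_L` -/

section Aux

variable {κ τ : ℝ}

/-- The denominator of the conformal factor. -/
def hden (κ : ℝ) (q : V3) : ℝ := 1 + κ / 4 * (q.1 ^ 2 + q.2.1 ^ 2)

lemma hden_pos {q : V3} (hq : q ∈ Dset κ) : 0 < hden κ q := by
  rcases lt_or_ge κ 0 with h | h
  · have h2 := hq h
    have hκ : κ / 4 < 0 := by linarith
    have h3 : κ / 4 * (-4 / κ) = -1 := by
      rw [div_mul_div_comm, div_eq_iff (by intro hc; apply h.ne; nlinarith : (4:ℝ) * κ ≠ 0)]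
      ring
    have h4 := mul_lt_mul_of_neg_left h2 hκ
    unfold hden; nlinarith
  · have : 0 ≤ κ / 4 * (q.1 ^ 2 + q.2.1 ^ 2) := by positivity
    unfold hden; linarith

lemma hden_ne {q : V3} (hq : q ∈ Dset κ) : hden κ q ≠ 0 := (hden_pos hq).ne'

lemma isOpen_Dset (κ : ℝ) : IsOpen (Dset κ) := by
  rcases lt_or_ge κ 0 with h | h
  · have he : Dset κ = (fun p : V3 => p.1 ^ 2 + p.2.1 ^ 2) ⁻¹' Set.Iio (-4 / κ) := by
      ext q; simp [Dset, h]
    rw [he]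
    exact (by fun_prop : Continuous fun p : V3 => p.1 ^ 2 + p.2.1 ^ 2).isOpen_preimage _
      isOpen_Iio
  · have he : Dset κ = Set.univ := by
      ext q
      simp only [Dset, Set.mem_setOf_eq, Set.mem_univ, iff_true]
      exact fun hc => absurd hc (not_lt.2 h)
    rw [he]; exact isOpen_univ

lemma lam_eq (q : V3) : lam κ q = (hden κ q)⁻¹ := by
  simp only [lam, hden, one_div]

lemma lam_inv (q : V3) : (lam κ q)⁻¹ = hden κ q := by rw [lam_eq, inv_inv]

lemma lam_mul {q : V3} (hq : q ∈ Dset κ) : lam κ q * hden κ q = 1 := by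
  rw [lam_eq]; exact inv_mul_cancel₀ (hden_ne hq)

lemma c1_eq {q : V3} (hq : q ∈ Dset κ) (u : V3) :
    c1 κ τ q u = lam κ q * (u.1 * Real.cos (κ / (2 * τ) * q.2.2) +
      u.2.1 * Real.sin (κ / (2 * τ) * q.2.2)) := by
  have h := hden_ne hq
  have hlm := lam_mul hq
  simp only [c1, gR, E1, lam_inv]
  linear_combination (lam κ q * (u.1 * Real.cos (κ / (2 * τ) * q.2.2) +
      u.2.1 * Real.sin (κ / (2 * τ) * q.2.2)) +
    (u.2.2 + τ * lam κ q * (q.2.1 * u.1 - q.1 * u.2.1)) * τ *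
      (q.2.1 * Real.cos (κ / (2 * τ) * q.2.2) - q.1 * Real.sin (κ / (2 * τ) * q.2.2))) * hlm

lemma c2_eq {q : V3} (hq : q ∈ Dset κ) (u : V3) :
    c2 κ τ q u = lam κ q * (u.2.1 * Real.cos (κ / (2 * τ) * q.2.2) -
      u.1 * Real.sin (κ / (2 * τ) * q.2.2)) := by
  have hlm := lam_mul hq
  simp only [c2, gR, E2, lam_inv]
  linear_combination (lam κ q * (u.2.1 * Real.cos (κ / (2 * τ) * q.2.2) -
      u.1 * Real.sin (κ / (2 * τ) * q.2.2)) -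
    (u.2.2 + τ * lam κ q * (q.2.1 * u.1 - q.1 * u.2.1)) * τ *
      (q.1 * Real.cos (κ / (2 * τ) * q.2.2) + q.2.1 * Real.sin (κ / (2 * τ) * q.2.2))) * hlm

lemma c3_eq (q u : V3) :
    c3 κ τ q u = u.2.2 + τ * lam κ q * (q.2.1 * u.1 - q.1 * u.2.1) := by
  simp only [c3, gR, E3]; ring

lemma c1_sub (q u v : V3) : c1 κ τ q (u - v) = c1 κ τ q u - c1 κ τ q v := by
  simp only [c1, gR, Prod.fst_sub, Prod.snd_sub]; ring

lemma c2_sub (q u v : V3) : c2 κ τ q (u - v) = c2 κ τ q u - c2 κ τ q v := by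
  simp only [c2, gR, Prod.fst_sub, Prod.snd_sub]; ring

lemma c3_sub (q u v : V3) : c3 κ τ q (u - v) = c3 κ τ q u - c3 κ τ q v := by
  simp only [c3, gR, Prod.fst_sub, Prod.snd_sub]; ring

lemma c1_add (q u v : V3) : c1 κ τ q (u + v) = c1 κ τ q u + c1 κ τ q v := by
  simp only [c1, gR, Prod.fst_add, Prod.snd_add]; ring

lemma c2_add (q u v : V3) : c2 κ τ q (u + v) = c2 κ τ q u + c2 κ τ q v := by
  simp only [c2, gR, Prod.fst_add, Prod.snd_add]; ring

lemma c3_add (q u v : V3) : c3 κ τ q (u + v) = c3 κ τ q u + c3 κ τ q v := by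
  simp only [c3, gR, Prod.fst_add, Prod.snd_add]; ring

lemma c1_smul (q : V3) (r : ℝ) (u : V3) : c1 κ τ q (r • u) = r * c1 κ τ q u := by
  simp only [c1, gR, Prod.smul_fst, Prod.smul_snd, smul_eq_mul]; ring

lemma c2_smul (q : V3) (r : ℝ) (u : V3) : c2 κ τ q (r • u) = r * c2 κ τ q u := by
  simp only [c2, gR, Prod.smul_fst, Prod.smul_snd, smul_eq_mul]; ring

lemma c3_smul (q : V3) (r : ℝ) (u : V3) : c3 κ τ q (r • u) = r * c3 κ τ q u := by
  simp only [c3, gR, Prod.smul_fst, Prod.smul_snd, smul_eq_mul]; ring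

lemma c1_E1 {q : V3} (hq : q ∈ Dset κ) : c1 κ τ q (E1 κ τ q) = 1 := by
  have hlm := lam_mul hq
  have hcs := Real.sin_sq_add_cos_sq (κ / (2 * τ) * q.2.2)
  rw [c1_eq hq]
  simp only [E1, lam_inv]
  linear_combination (lam κ q * hden κ q) * hcs + hlm

lemma c1_E2 {q : V3} (hq : q ∈ Dset κ) : c1 κ τ q (E2 κ τ q) = 0 := by
  rw [c1_eq hq]; simp only [E2, lam_inv]; ring

lemma c1_E3 {q : V3} (hq : q ∈ Dset κ) : c1 κ τ q E3 = 0 := by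
  rw [c1_eq hq]; simp only [E3]; ring

lemma c2_E1 {q : V3} (hq : q ∈ Dset κ) : c2 κ τ q (E1 κ τ q) = 0 := by
  rw [c2_eq hq]; simp only [E1, lam_inv]; ring

lemma c2_E2 {q : V3} (hq : q ∈ Dset κ) : c2 κ τ q (E2 κ τ q) = 1 := by
  have hlm := lam_mul hq
  have hcs := Real.sin_sq_add_cos_sq (κ / (2 * τ) * q.2.2)
  rw [c2_eq hq]
  simp only [E2, lam_inv]
  linear_combination (lam κ q * hden κ q) * hcs + hlm

lemma c2_E3 {q : V3} (hq : q ∈ Dset κ) : c2 κ τ q E3 = 0 := by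
  rw [c2_eq hq]; simp only [E3]; ring

lemma c3_E1 {q : V3} (hq : q ∈ Dset κ) : c3 κ τ q (E1 κ τ q) = 0 := by
  have hlm := lam_mul hq
  rw [c3_eq]
  simp only [E1, lam_inv]
  linear_combination (τ * (q.2.1 * Real.cos (κ / (2 * τ) * q.2.2) -
    q.1 * Real.sin (κ / (2 * τ) * q.2.2))) * hlm

lemma c3_E2 {q : V3} (hq : q ∈ Dset κ) : c3 κ τ q (E2 κ τ q) = 0 := by
  have hlm := lam_mul hq
  rw [c3_eq]
  simp only [E2, lam_inv]
  linear_combination (-(τ * (q.1 * Real.cos (κ / (2 * τ) * q.2.2) +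
    q.2.1 * Real.sin (κ / (2 * τ) * q.2.2)))) * hlm

lemma c3_E3 (q : V3) : c3 κ τ q E3 = 1 := by
  rw [c3_eq]; simp only [E3]; ring

lemma xi_def : xi = E3 := rfl

lemma expand {q : V3} (hq : q ∈ Dset κ) (u : V3) :
    c1 κ τ q u • E1 κ τ q + c2 κ τ q u • E2 κ τ q + c3 κ τ q u • E3 = u := by
  have hlm := lam_mul hq
  have hcs := Real.sin_sq_add_cos_sq (κ / (2 * τ) * q.2.2)
  rw [c1_eq hq, c2_eq hq, c3_eq]
  simp only [E1, E2, E3, lam_inv, Prod.smul_mk, Prod.mk_add_mk, smul_eq_mul]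
  refine Prod.ext ?_ (Prod.ext ?_ ?_)
  · show _ = u.1
    linear_combination (lam κ q * hden κ q * u.1) * hcs + u.1 * hlm
  · show _ = u.2.1
    linear_combination (lam κ q * hden κ q * u.2.1) * hcs + u.2.1 * hlm
  · show _ = u.2.2
    linear_combination (τ * lam κ q * (q.1 * u.2.1 - q.2.1 * u.1)) * hcs

lemma gL_frame {q : V3} (hq : q ∈ Dset κ) (u v : V3) :
    gL κ τ q u v = c1 κ τ q u * c1 κ τ q v + c2 κ τ q u * c2 κ τ q v -
      c3 κ τ q u * c3 κ τ q v := by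
  have hcs := Real.sin_sq_add_cos_sq (κ / (2 * τ) * q.2.2)
  rw [c1_eq hq, c1_eq hq, c2_eq hq, c2_eq hq, c3_eq, c3_eq]
  simp only [gL]
  linear_combination (-(lam κ q ^ 2 * (u.1 * v.1 + u.2.1 * v.2.1))) * hcs

/-! #### Smoothness -/

lemma contDiffAt_lam {p : V3} (hp : p ∈ Dset κ) : ContDiffAt ℝ 2 (lam κ) p := by
  have h : ContDiffAt ℝ 2 (fun q : V3 => (hden κ q)⁻¹) p :=
    ContDiffAt.inv (by unfold hden; fun_prop) (hden_ne hp)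
  simpa [show lam κ = fun q : V3 => (hden κ q)⁻¹ from funext lam_eq] using h

lemma contDiffAt_cosθ {p : V3} :
    ContDiffAt ℝ 2 (fun q : V3 => Real.cos (κ / (2 * τ) * q.2.2)) p :=
  Real.contDiff_cos.contDiffAt.comp p (by fun_prop)

lemma contDiffAt_sinθ {p : V3} :
    ContDiffAt ℝ 2 (fun q : V3 => Real.sin (κ / (2 * τ) * q.2.2)) p :=
  Real.contDiff_sin.contDiffAt.comp p (by fun_prop)

lemma contDiffAt_comp1 {p : V3} {W : V3 → V3} (hp : p ∈ Dset κ)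
    (hW : ContDiffOn ℝ (⊤ : ℕ∞) W (Dset κ)) :
    ContDiffAt ℝ 2 (fun q => c1 κ τ q (W q)) p := by
  have hWp : ContDiffAt ℝ 2 W p :=
    (hW.contDiffAt ((isOpen_Dset κ).mem_nhds hp)).of_le (WithTop.coe_le_coe.mpr le_top)
  have h1 : ContDiffAt ℝ 2 (fun q : V3 => lam κ q *
      ((W q).1 * Real.cos (κ / (2 * τ) * q.2.2) +
        (W q).2.1 * Real.sin (κ / (2 * τ) * q.2.2))) p := by
    exact (contDiffAt_lam hp).mul
      ((hWp.fst.mul contDiffAt_cosθ).add (hWp.snd.fst.mul contDiffAt_sinθ))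
  refine h1.congr_of_eventuallyEq ?_
  filter_upwards [(isOpen_Dset κ).mem_nhds hp] with q hq
  exact c1_eq hq _

lemma contDiffAt_comp2 {p : V3} {W : V3 → V3} (hp : p ∈ Dset κ)
    (hW : ContDiffOn ℝ (⊤ : ℕ∞) W (Dset κ)) :
    ContDiffAt ℝ 2 (fun q => c2 κ τ q (W q)) p := by
  have hWp : ContDiffAt ℝ 2 W p :=
    (hW.contDiffAt ((isOpen_Dset κ).mem_nhds hp)).of_le (WithTop.coe_le_coe.mpr le_top)
  have h1 : ContDiffAt ℝ 2 (fun q : V3 => lam κ q *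
      ((W q).2.1 * Real.cos (κ / (2 * τ) * q.2.2) -
        (W q).1 * Real.sin (κ / (2 * τ) * q.2.2))) p := by
    exact (contDiffAt_lam hp).mul
      ((hWp.snd.fst.mul contDiffAt_cosθ).sub (hWp.fst.mul contDiffAt_sinθ))
  refine h1.congr_of_eventuallyEq ?_
  filter_upwards [(isOpen_Dset κ).mem_nhds hp] with q hq
  exact c2_eq hq _

lemma contDiffAt_comp3 {p : V3} {W : V3 → V3} (hp : p ∈ Dset κ)
    (hW : ContDiffOn ℝ (⊤ : ℕ∞) W (Dset κ)) :
    ContDiffAt ℝ 2 (fun q => c3 κ τ q (W q)) p := by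
  have hWp : ContDiffAt ℝ 2 W p :=
    (hW.contDiffAt ((isOpen_Dset κ).mem_nhds hp)).of_le (WithTop.coe_le_coe.mpr le_top)
  have h1 : ContDiffAt ℝ 2 (fun q : V3 => (W q).2.2 +
      τ * lam κ q * (q.2.1 * (W q).1 - q.1 * (W q).2.1)) p := by
    refine hWp.snd.snd.add ((contDiffAt_const.mul (contDiffAt_lam hp)).mul ?_)
    exact ((contDiffAt_snd.fst.mul hWp.fst).sub (contDiffAt_fst.mul hWp.snd.fst))
  refine h1.congr_of_eventuallyEq ?_
  filter_upwards [(isOpen_Dset κ).mem_nhds hp] with q hq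
  exact c3_eq q _

/-! #### Explicit first derivatives of the frame coefficients -/

/-- A covector on `V3` with the given coefficients. -/
def cov (a b c : ℝ) : V3 →L[ℝ] ℝ :=
  a • (ContinuousLinearMap.fst ℝ ℝ (ℝ × ℝ)) +
    b • ((ContinuousLinearMap.fst ℝ ℝ ℝ).comp (ContinuousLinearMap.snd ℝ ℝ (ℝ × ℝ))) +
    c • ((ContinuousLinearMap.snd ℝ ℝ ℝ).comp (ContinuousLinearMap.snd ℝ ℝ (ℝ × ℝ)))

@[simp] lemma cov_apply (a b c : ℝ) (v : V3) :
    cov a b c v = a * v.1 + b * v.2.1 + c * v.2.2 := by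
  simp [cov]

lemma hasFDerivAt_q1 (p : V3) :
    HasFDerivAt (fun q : V3 => q.1) (cov 1 0 0) p := by
  have h : HasFDerivAt (fun q : V3 => q.1) (ContinuousLinearMap.fst ℝ ℝ (ℝ × ℝ)) p :=
    hasFDerivAt_fst
  convert h using 1
  ext v <;> simp

lemma hasFDerivAt_q2 (p : V3) :
    HasFDerivAt (fun q : V3 => q.2.1) (cov 0 1 0) p := by
  have h : HasFDerivAt (fun q : V3 => q.2.1)
      ((ContinuousLinearMap.fst ℝ ℝ ℝ).comp (ContinuousLinearMap.snd ℝ ℝ (ℝ × ℝ))) p :=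
    hasFDerivAt_fst.comp p hasFDerivAt_snd
  convert h using 1
  ext v <;> simp

lemma hasFDerivAt_q3 (p : V3) :
    HasFDerivAt (fun q : V3 => q.2.2) (cov 0 0 1) p := by
  have h : HasFDerivAt (fun q : V3 => q.2.2)
      ((ContinuousLinearMap.snd ℝ ℝ ℝ).comp (ContinuousLinearMap.snd ℝ ℝ (ℝ × ℝ))) p :=
    hasFDerivAt_snd.comp p hasFDerivAt_snd
  convert h using 1
  ext v <;> simp

lemma hasFDerivAt_hden (p : V3) :
    HasFDerivAt (hden κ) (cov (κ / 2 * p.1) (κ / 2 * p.2.1) 0) p := by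
  have he : hden κ = fun q : V3 => 1 + κ / 4 * (q.1 * q.1 + q.2.1 * q.2.1) := by
    funext q; simp only [hden]; ring
  rw [he]
  have h := ((((hasFDerivAt_q1 p).fun_mul (hasFDerivAt_q1 p)).fun_add
      ((hasFDerivAt_q2 p).fun_mul (hasFDerivAt_q2 p))).const_mul (κ / 4)).const_add 1
  refine h.congr_fderiv ?_
  ext v <;> simp <;> ring

lemma hasFDerivAt_lam {p : V3} (hp : p ∈ Dset κ) :
    HasFDerivAt (lam κ)
      (cov (-(κ / 2) * lam κ p ^ 2 * p.1) (-(κ / 2) * lam κ p ^ 2 * p.2.1) 0) p := by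
  have h := (hasDerivAt_inv (hden_ne hp)).comp_hasFDerivAt p (hasFDerivAt_hden (κ := κ) p)
  have he : lam κ = fun q : V3 => (hden κ q)⁻¹ := funext lam_eq
  rw [he]
  refine h.congr_fderiv ?_
  ext v <;>
    simp [lam_eq, ContinuousLinearMap.smul_apply] <;> ring

lemma hasFDerivAt_cosθ (p : V3) :
    HasFDerivAt (fun q : V3 => Real.cos (κ / (2 * τ) * q.2.2))
      (cov 0 0 (-Real.sin (κ / (2 * τ) * p.2.2) * (κ / (2 * τ)))) p := by
  have h := (HasFDerivAt.cos ((hasFDerivAt_q3 p).const_mul (κ / (2 * τ))))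
  refine h.congr_fderiv ?_
  ext v <;> simp [ContinuousLinearMap.smul_apply] <;> ring

lemma hasFDerivAt_sinθ (p : V3) :
    HasFDerivAt (fun q : V3 => Real.sin (κ / (2 * τ) * q.2.2))
      (cov 0 0 (Real.cos (κ / (2 * τ) * p.2.2) * (κ / (2 * τ)))) p := by
  have h := (HasFDerivAt.sin ((hasFDerivAt_q3 p).const_mul (κ / (2 * τ))))
  refine h.congr_fderiv ?_
  ext v <;> simp [ContinuousLinearMap.smul_apply] <;> ring

lemma fderiv_c1 {p : V3} {W : V3 → V3} (hp : p ∈ Dset κ)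
    (hW : ContDiffOn ℝ (⊤ : ℕ∞) W (Dset κ)) (v : V3) :
    fderiv ℝ (fun q => c1 κ τ q (W q)) p v =
      -(κ / 2) * lam κ p ^ 2 * (p.1 * v.1 + p.2.1 * v.2.1) *
          ((W p).1 * Real.cos (κ / (2 * τ) * p.2.2) +
            (W p).2.1 * Real.sin (κ / (2 * τ) * p.2.2)) +
        lam κ p * ((fderiv ℝ W p v).1 * Real.cos (κ / (2 * τ) * p.2.2) +
            (fderiv ℝ W p v).2.1 * Real.sin (κ / (2 * τ) * p.2.2)) +
        lam κ p * ((W p).2.1 * Real.cos (κ / (2 * τ) * p.2.2) -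
            (W p).1 * Real.sin (κ / (2 * τ) * p.2.2)) * (κ / (2 * τ) * v.2.2) := by
  have hWp : DifferentiableAt ℝ W p :=
    ((hW.contDiffAt ((isOpen_Dset κ).mem_nhds hp)).of_le (WithTop.coe_le_coe.mpr le_top) :
      ContDiffAt ℝ 2 W p).differentiableAt (by norm_num)
  have hW1 := hWp.hasFDerivAt.fst
  have hW2 := hWp.hasFDerivAt.snd.fst
  have H := (hasFDerivAt_lam hp).fun_mul
    ((hW1.fun_mul (hasFDerivAt_cosθ (κ := κ) (τ := τ) p)).fun_add
      (hW2.fun_mul (hasFDerivAt_sinθ (κ := κ) (τ := τ) p)))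
  have hEq : (fun q => c1 κ τ q (W q)) =ᶠ[nhds p]
      (fun q : V3 => lam κ q * ((W q).1 * Real.cos (κ / (2 * τ) * q.2.2) +
        (W q).2.1 * Real.sin (κ / (2 * τ) * q.2.2))) := by
    filter_upwards [(isOpen_Dset κ).mem_nhds hp] with q hq
    exact c1_eq hq _
  rw [hEq.fderiv_eq, H.fderiv]
  simp only [ContinuousLinearMap.add_apply, ContinuousLinearMap.smul_apply,
    ContinuousLinearMap.coe_comp', Function.comp_apply, ContinuousLinearMap.coe_fst',
    ContinuousLinearMap.coe_snd', cov_apply, smul_eq_mul]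
  ring

lemma fderiv_c2 {p : V3} {W : V3 → V3} (hp : p ∈ Dset κ)
    (hW : ContDiffOn ℝ (⊤ : ℕ∞) W (Dset κ)) (v : V3) :
    fderiv ℝ (fun q => c2 κ τ q (W q)) p v =
      -(κ / 2) * lam κ p ^ 2 * (p.1 * v.1 + p.2.1 * v.2.1) *
          ((W p).2.1 * Real.cos (κ / (2 * τ) * p.2.2) -
            (W p).1 * Real.sin (κ / (2 * τ) * p.2.2)) +
        lam κ p * ((fderiv ℝ W p v).2.1 * Real.cos (κ / (2 * τ) * p.2.2) -
            (fderiv ℝ W p v).1 * Real.sin (κ / (2 * τ) * p.2.2)) +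
        lam κ p * (-((W p).2.1 * Real.sin (κ / (2 * τ) * p.2.2)) -
            (W p).1 * Real.cos (κ / (2 * τ) * p.2.2)) * (κ / (2 * τ) * v.2.2) := by
  have hWp : DifferentiableAt ℝ W p :=
    ((hW.contDiffAt ((isOpen_Dset κ).mem_nhds hp)).of_le (WithTop.coe_le_coe.mpr le_top) :
      ContDiffAt ℝ 2 W p).differentiableAt (by norm_num)
  have hW1 := hWp.hasFDerivAt.fst
  have hW2 := hWp.hasFDerivAt.snd.fst
  have H := (hasFDerivAt_lam hp).fun_mul
    ((hW2.fun_mul (hasFDerivAt_cosθ (κ := κ) (τ := τ) p)).fun_sub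
      (hW1.fun_mul (hasFDerivAt_sinθ (κ := κ) (τ := τ) p)))
  have hEq : (fun q => c2 κ τ q (W q)) =ᶠ[nhds p]
      (fun q : V3 => lam κ q * ((W q).2.1 * Real.cos (κ / (2 * τ) * q.2.2) -
        (W q).1 * Real.sin (κ / (2 * τ) * q.2.2))) := by
    filter_upwards [(isOpen_Dset κ).mem_nhds hp] with q hq
    exact c2_eq hq _
  rw [hEq.fderiv_eq, H.fderiv]
  simp only [ContinuousLinearMap.add_apply, ContinuousLinearMap.smul_apply,
    ContinuousLinearMap.sub_apply, ContinuousLinearMap.coe_comp', Function.comp_apply,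
    ContinuousLinearMap.coe_fst', ContinuousLinearMap.coe_snd', cov_apply, smul_eq_mul]
  ring

lemma fderiv_c3 {p : V3} {W : V3 → V3} (hp : p ∈ Dset κ)
    (hW : ContDiffOn ℝ (⊤ : ℕ∞) W (Dset κ)) (v : V3) :
    fderiv ℝ (fun q => c3 κ τ q (W q)) p v =
      (fderiv ℝ W p v).2.2 +
        τ * (-(κ / 2) * lam κ p ^ 2 * (p.1 * v.1 + p.2.1 * v.2.1)) *
          (p.2.1 * (W p).1 - p.1 * (W p).2.1) +
        τ * lam κ p * (v.2.1 * (W p).1 + p.2.1 * (fderiv ℝ W p v).1 -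
          v.1 * (W p).2.1 - p.1 * (fderiv ℝ W p v).2.1) := by
  have hWp : DifferentiableAt ℝ W p :=
    ((hW.contDiffAt ((isOpen_Dset κ).mem_nhds hp)).of_le (WithTop.coe_le_coe.mpr le_top) :
      ContDiffAt ℝ 2 W p).differentiableAt (by norm_num)
  have hW1 := hWp.hasFDerivAt.fst
  have hW2 := hWp.hasFDerivAt.snd.fst
  have hW3 := hWp.hasFDerivAt.snd.snd
  have H := hW3.fun_add
    (((hasFDerivAt_lam hp).const_mul τ).fun_mul
      (((hasFDerivAt_q2 p).fun_mul hW1).fun_sub ((hasFDerivAt_q1 p).fun_mul hW2)))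
  have hEq : (fun q => c3 κ τ q (W q)) =ᶠ[nhds p]
      (fun q : V3 => (W q).2.2 + τ * lam κ q * (q.2.1 * (W q).1 - q.1 * (W q).2.1)) := by
    filter_upwards [(isOpen_Dset κ).mem_nhds hp] with q hq
    exact c3_eq q _
  rw [hEq.fderiv_eq, H.fderiv]
  simp only [ContinuousLinearMap.add_apply, ContinuousLinearMap.smul_apply,
    ContinuousLinearMap.sub_apply, ContinuousLinearMap.coe_comp', Function.comp_apply,
    ContinuousLinearMap.coe_fst', ContinuousLinearMap.coe_snd', cov_apply, smul_eq_mul]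
  ring

section Bracket

variable {p : V3} {X Y : V3 → V3}

lemma bracket1 (hτ : τ ≠ 0) (hp : p ∈ Dset κ) (hX : ContDiffOn ℝ (⊤ : ℕ∞) X (Dset κ))
    (hY : ContDiffOn ℝ (⊤ : ℕ∞) Y (Dset κ)) :
    c1 κ τ p (fderiv ℝ Y p (X p)) - c1 κ τ p (fderiv ℝ X p (Y p)) =
      fderiv ℝ (fun q => c1 κ τ q (Y q)) p (X p) -
        fderiv ℝ (fun q => c1 κ τ q (X q)) p (Y p) +
        κ / (2 * τ) * (c2 κ τ p (X p) * c3 κ τ p (Y p) -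
          c3 κ τ p (X p) * c2 κ τ p (Y p)) := by
  rw [fderiv_c1 hp hY (X p), fderiv_c1 hp hX (Y p), c1_eq hp, c1_eq hp,
    c2_eq hp, c2_eq hp, c3_eq, c3_eq]
  field_simp
  ring

lemma bracket2 (hτ : τ ≠ 0) (hp : p ∈ Dset κ) (hX : ContDiffOn ℝ (⊤ : ℕ∞) X (Dset κ))
    (hY : ContDiffOn ℝ (⊤ : ℕ∞) Y (Dset κ)) :
    c2 κ τ p (fderiv ℝ Y p (X p)) - c2 κ τ p (fderiv ℝ X p (Y p)) =
      fderiv ℝ (fun q => c2 κ τ q (Y q)) p (X p) -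
        fderiv ℝ (fun q => c2 κ τ q (X q)) p (Y p) -
        κ / (2 * τ) * (c1 κ τ p (X p) * c3 κ τ p (Y p) -
          c3 κ τ p (X p) * c1 κ τ p (Y p)) := by
  rw [fderiv_c2 hp hY (X p), fderiv_c2 hp hX (Y p), c2_eq hp, c2_eq hp,
    c1_eq hp, c1_eq hp, c3_eq, c3_eq]
  field_simp
  ring

lemma bracket3 (hp : p ∈ Dset κ) (hX : ContDiffOn ℝ (⊤ : ℕ∞) X (Dset κ))
    (hY : ContDiffOn ℝ (⊤ : ℕ∞) Y (Dset κ)) :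
    c3 κ τ p (fderiv ℝ Y p (X p)) - c3 κ τ p (fderiv ℝ X p (Y p)) =
      fderiv ℝ (fun q => c3 κ τ q (Y q)) p (X p) -
        fderiv ℝ (fun q => c3 κ τ q (X q)) p (Y p) +
        2 * τ * (c1 κ τ p (X p) * c2 κ τ p (Y p) -
          c2 κ τ p (X p) * c1 κ τ p (Y p)) := by
  have hcs := Real.sin_sq_add_cos_sq (κ / (2 * τ) * p.2.2)
  have hlm : lam κ p * (1 + κ / 4 * (p.1 ^ 2 + p.2.1 ^ 2)) = 1 := lam_mul hp
  rw [fderiv_c3 hp hY (X p), fderiv_c3 hp hX (Y p), c3_eq, c3_eq,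
    c1_eq hp, c1_eq hp, c2_eq hp, c2_eq hp]
  linear_combination
    (-2 * τ * lam κ p ^ 2 * ((X p).1 * (Y p).2.1 - (X p).2.1 * (Y p).1)) * hcs +
      (-2 * τ * lam κ p * ((X p).1 * (Y p).2.1 - (X p).2.1 * (Y p).1)) * hlm

end Bracket

section CoeffNabla

variable {p : V3}

lemma coeff_nabla1 (A B : V3 → V3) {q : V3} (hq : q ∈ Dset κ) :
    c1 κ τ q (nablaL κ τ A B q) =
      fderiv ℝ (fun r => c1 κ τ r (B r)) q (A q) -
        τ * (c2 κ τ q (A q) * c3 κ τ q (B q)) -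
        (κ + 2 * τ ^ 2) / (2 * τ) * (c3 κ τ q (A q) * c2 κ τ q (B q)) := by
  simp only [nablaL, c1_add, c1_sub, c1_smul, c1_E1 hq, c1_E2 hq, c1_E3 hq]
  ring

lemma coeff_nabla2 (A B : V3 → V3) {q : V3} (hq : q ∈ Dset κ) :
    c2 κ τ q (nablaL κ τ A B q) =
      fderiv ℝ (fun r => c2 κ τ r (B r)) q (A q) +
        τ * (c1 κ τ q (A q) * c3 κ τ q (B q)) +
        (κ + 2 * τ ^ 2) / (2 * τ) * (c3 κ τ q (A q) * c1 κ τ q (B q)) := by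
  simp only [nablaL, c2_add, c2_sub, c2_smul, c2_E1 hq, c2_E2 hq, c2_E3 hq]
  ring

lemma coeff_nabla3 (A B : V3 → V3) {q : V3} (hq : q ∈ Dset κ) :
    c3 κ τ q (nablaL κ τ A B q) =
      fderiv ℝ (fun r => c3 κ τ r (B r)) q (A q) +
        τ * (c1 κ τ q (A q) * c2 κ τ q (B q) - c2 κ τ q (A q) * c1 κ τ q (B q)) := by
  simp only [nablaL, c3_add, c3_sub, c3_smul, c3_E1 hq, c3_E2 hq, c3_E3 q]
  ring

end CoeffNabla

section FderivNabla

variable {p : V3} {A B : V3 → V3}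

lemma fderiv_c1_nabla (hp : p ∈ Dset κ) (hA : ContDiffOn ℝ (⊤ : ℕ∞) A (Dset κ))
    (hB : ContDiffOn ℝ (⊤ : ℕ∞) B (Dset κ)) (v : V3) :
    fderiv ℝ (fun q => c1 κ τ q (nablaL κ τ A B q)) p v =
      fderiv ℝ (fderiv ℝ (fun r => c1 κ τ r (B r))) p v (A p) +
        fderiv ℝ (fun r => c1 κ τ r (B r)) p (fderiv ℝ A p v) -
        τ * (fderiv ℝ (fun r => c2 κ τ r (A r)) p v * c3 κ τ p (B p) +
          c2 κ τ p (A p) * fderiv ℝ (fun r => c3 κ τ r (B r)) p v) -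
        (κ + 2 * τ ^ 2) / (2 * τ) *
          (fderiv ℝ (fun r => c3 κ τ r (A r)) p v * c2 κ τ p (B p) +
            c3 κ τ p (A p) * fderiv ℝ (fun r => c2 κ τ r (B r)) p v) := by
  have hmem := (isOpen_Dset κ).mem_nhds hp
  have hAp : DifferentiableAt ℝ A p :=
    ((hA.contDiffAt hmem).of_le (WithTop.coe_le_coe.mpr le_top) : ContDiffAt ℝ 2 A p).differentiableAt (by norm_num)
  have hb1' : DifferentiableAt ℝ (fderiv ℝ (fun r => c1 κ τ r (B r))) p :=
    ((contDiffAt_comp1 hp hB).fderiv_right (m := 1) (by norm_num)).differentiableAt one_ne_zero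
  have H1 := hb1'.hasFDerivAt.clm_apply hAp.hasFDerivAt
  have ha2 := ((contDiffAt_comp2 (τ := τ) hp hA).differentiableAt (by norm_num)).hasFDerivAt
  have ha3 := ((contDiffAt_comp3 (τ := τ) hp hA).differentiableAt (by norm_num)).hasFDerivAt
  have hb2 := ((contDiffAt_comp2 (τ := τ) hp hB).differentiableAt (by norm_num)).hasFDerivAt
  have hb3 := ((contDiffAt_comp3 (τ := τ) hp hB).differentiableAt (by norm_num)).hasFDerivAt
  have H := (H1.fun_sub ((ha2.fun_mul hb3).const_mul τ)).fun_sub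
    ((ha3.fun_mul hb2).const_mul ((κ + 2 * τ ^ 2) / (2 * τ)))
  have hEq : (fun q => c1 κ τ q (nablaL κ τ A B q)) =ᶠ[nhds p]
      (fun q => fderiv ℝ (fun r => c1 κ τ r (B r)) q (A q) -
        τ * (c2 κ τ q (A q) * c3 κ τ q (B q)) -
        (κ + 2 * τ ^ 2) / (2 * τ) * (c3 κ τ q (A q) * c2 κ τ q (B q))) := by
    filter_upwards [hmem] with q hq
    exact coeff_nabla1 A B hq
  rw [hEq.fderiv_eq, H.fderiv]
  simp only [ContinuousLinearMap.add_apply, ContinuousLinearMap.sub_apply,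
    ContinuousLinearMap.smul_apply, ContinuousLinearMap.coe_comp', Function.comp_apply,
    ContinuousLinearMap.flip_apply, smul_eq_mul]
  ring

lemma fderiv_c2_nabla (hp : p ∈ Dset κ) (hA : ContDiffOn ℝ (⊤ : ℕ∞) A (Dset κ))
    (hB : ContDiffOn ℝ (⊤ : ℕ∞) B (Dset κ)) (v : V3) :
    fderiv ℝ (fun q => c2 κ τ q (nablaL κ τ A B q)) p v =
      fderiv ℝ (fderiv ℝ (fun r => c2 κ τ r (B r))) p v (A p) +
        fderiv ℝ (fun r => c2 κ τ r (B r)) p (fderiv ℝ A p v) +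
        τ * (fderiv ℝ (fun r => c1 κ τ r (A r)) p v * c3 κ τ p (B p) +
          c1 κ τ p (A p) * fderiv ℝ (fun r => c3 κ τ r (B r)) p v) +
        (κ + 2 * τ ^ 2) / (2 * τ) *
          (fderiv ℝ (fun r => c3 κ τ r (A r)) p v * c1 κ τ p (B p) +
            c3 κ τ p (A p) * fderiv ℝ (fun r => c1 κ τ r (B r)) p v) := by
  have hmem := (isOpen_Dset κ).mem_nhds hp
  have hAp : DifferentiableAt ℝ A p :=
    ((hA.contDiffAt hmem).of_le (WithTop.coe_le_coe.mpr le_top) : ContDiffAt ℝ 2 A p).differentiableAt (by norm_num)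
  have hb2' : DifferentiableAt ℝ (fderiv ℝ (fun r => c2 κ τ r (B r))) p :=
    ((contDiffAt_comp2 hp hB).fderiv_right (m := 1) (by norm_num)).differentiableAt one_ne_zero
  have H1 := hb2'.hasFDerivAt.clm_apply hAp.hasFDerivAt
  have ha1 := ((contDiffAt_comp1 (τ := τ) hp hA).differentiableAt (by norm_num)).hasFDerivAt
  have ha3 := ((contDiffAt_comp3 (τ := τ) hp hA).differentiableAt (by norm_num)).hasFDerivAt
  have hb1 := ((contDiffAt_comp1 (τ := τ) hp hB).differentiableAt (by norm_num)).hasFDerivAt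
  have hb3 := ((contDiffAt_comp3 (τ := τ) hp hB).differentiableAt (by norm_num)).hasFDerivAt
  have H := (H1.fun_add ((ha1.fun_mul hb3).const_mul τ)).fun_add
    ((ha3.fun_mul hb1).const_mul ((κ + 2 * τ ^ 2) / (2 * τ)))
  have hEq : (fun q => c2 κ τ q (nablaL κ τ A B q)) =ᶠ[nhds p]
      (fun q => fderiv ℝ (fun r => c2 κ τ r (B r)) q (A q) +
        τ * (c1 κ τ q (A q) * c3 κ τ q (B q)) +
        (κ + 2 * τ ^ 2) / (2 * τ) * (c3 κ τ q (A q) * c1 κ τ q (B q))) := by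
    filter_upwards [hmem] with q hq
    exact coeff_nabla2 A B hq
  rw [hEq.fderiv_eq, H.fderiv]
  simp only [ContinuousLinearMap.add_apply, ContinuousLinearMap.sub_apply,
    ContinuousLinearMap.smul_apply, ContinuousLinearMap.coe_comp', Function.comp_apply,
    ContinuousLinearMap.flip_apply, smul_eq_mul]
  ring

lemma fderiv_c3_nabla (hp : p ∈ Dset κ) (hA : ContDiffOn ℝ (⊤ : ℕ∞) A (Dset κ))
    (hB : ContDiffOn ℝ (⊤ : ℕ∞) B (Dset κ)) (v : V3) :
    fderiv ℝ (fun q => c3 κ τ q (nablaL κ τ A B q)) p v =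
      fderiv ℝ (fderiv ℝ (fun r => c3 κ τ r (B r))) p v (A p) +
        fderiv ℝ (fun r => c3 κ τ r (B r)) p (fderiv ℝ A p v) +
        τ * (fderiv ℝ (fun r => c1 κ τ r (A r)) p v * c2 κ τ p (B p) +
          c1 κ τ p (A p) * fderiv ℝ (fun r => c2 κ τ r (B r)) p v -
          (fderiv ℝ (fun r => c2 κ τ r (A r)) p v * c1 κ τ p (B p) +
            c2 κ τ p (A p) * fderiv ℝ (fun r => c1 κ τ r (B r)) p v)) := by
  have hmem := (isOpen_Dset κ).mem_nhds hp
  have hAp : DifferentiableAt ℝ A p :=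
    ((hA.contDiffAt hmem).of_le (WithTop.coe_le_coe.mpr le_top) : ContDiffAt ℝ 2 A p).differentiableAt (by norm_num)
  have hb3' : DifferentiableAt ℝ (fderiv ℝ (fun r => c3 κ τ r (B r))) p :=
    ((contDiffAt_comp3 hp hB).fderiv_right (m := 1) (by norm_num)).differentiableAt one_ne_zero
  have H1 := hb3'.hasFDerivAt.clm_apply hAp.hasFDerivAt
  have ha1 := ((contDiffAt_comp1 (τ := τ) hp hA).differentiableAt (by norm_num)).hasFDerivAt
  have ha2 := ((contDiffAt_comp2 (τ := τ) hp hA).differentiableAt (by norm_num)).hasFDerivAt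
  have hb1 := ((contDiffAt_comp1 (τ := τ) hp hB).differentiableAt (by norm_num)).hasFDerivAt
  have hb2 := ((contDiffAt_comp2 (τ := τ) hp hB).differentiableAt (by norm_num)).hasFDerivAt
  have H := H1.fun_add (((ha1.fun_mul hb2).fun_sub (ha2.fun_mul hb1)).const_mul τ)
  have hEq : (fun q => c3 κ τ q (nablaL κ τ A B q)) =ᶠ[nhds p]
      (fun q => fderiv ℝ (fun r => c3 κ τ r (B r)) q (A q) +
        τ * (c1 κ τ q (A q) * c2 κ τ q (B q) - c2 κ τ q (A q) * c1 κ τ q (B q))) := by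
    filter_upwards [hmem] with q hq
    exact coeff_nabla3 A B hq
  rw [hEq.fderiv_eq, H.fderiv]
  simp only [ContinuousLinearMap.add_apply, ContinuousLinearMap.sub_apply,
    ContinuousLinearMap.smul_apply, ContinuousLinearMap.coe_comp', Function.comp_apply,
    ContinuousLinearMap.flip_apply, smul_eq_mul]
  ring

end FderivNabla

end Aux

set_option maxHeartbeats 1600000 in
/-- eq. (5.2.1): the curvature tensor of `𝕃³(κ,τ)`. -/
theorem curvature_L (κ τ : ℝ) (hτ : τ ≠ 0) (X Y Z : V3 → V3)
    (hX : ContDiffOn ℝ (⊤ : ℕ∞) X (Dset κ)) (hY : ContDiffOn ℝ (⊤ : ℕ∞) Y (Dset κ))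
    (hZ : ContDiffOn ℝ (⊤ : ℕ∞) Z (Dset κ)) (p : V3) (hp : p ∈ Dset κ) :
    nablaL κ τ (lie X Y) Z p - nablaL κ τ X (nablaL κ τ Y Z) p +
        nablaL κ τ Y (nablaL κ τ X Z) p =
      (κ + 3 * τ ^ 2) •
          (gL κ τ p (X p) (Z p) • Y p - gL κ τ p (Y p) (Z p) • X p)
        - ((κ + 4 * τ ^ 2) * gL κ τ p (Z p) xi) •
            (gL κ τ p (Y p) xi • X p - gL κ τ p (X p) xi • Y p)
        - ((κ + 4 * τ ^ 2) *
            (gL κ τ p (Y p) (Z p) * gL κ τ p (X p) xi -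
              gL κ τ p (X p) (Z p) * gL κ τ p (Y p) xi)) • xi := by
  have hmem := (isOpen_Dset κ).mem_nhds hp
  have hs1 := ((contDiffAt_comp1 (τ := τ) hp hZ).isSymmSndFDerivAt (by simp)).eq
  have hs2 := ((contDiffAt_comp2 (τ := τ) hp hZ).isSymmSndFDerivAt (by simp)).eq
  have hs3 := ((contDiffAt_comp3 (τ := τ) hp hZ).isSymmSndFDerivAt (by simp)).eq
  have hT1 : nablaL κ τ (lie X Y) Z p =
      (fderiv ℝ (fun q => c1 κ τ q (Z q)) p (lie X Y p)) • E1 κ τ p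
        + (fderiv ℝ (fun q => c2 κ τ q (Z q)) p (lie X Y p)) • E2 κ τ p
        + (fderiv ℝ (fun q => c3 κ τ q (Z q)) p (lie X Y p)) • E3
        - (τ * c2 κ τ p (lie X Y p) * c3 κ τ p (Z p)) • E1 κ τ p
        + (τ * c1 κ τ p (lie X Y p) * c3 κ τ p (Z p)) • E2 κ τ p
        + (τ * (c1 κ τ p (lie X Y p) * c2 κ τ p (Z p) -
            c2 κ τ p (lie X Y p) * c1 κ τ p (Z p))) • E3
        + ((κ + 2 * τ ^ 2) / (2 * τ) * (c3 κ τ p (lie X Y p) * c1 κ τ p (Z p))) • E2 κ τ p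
        - ((κ + 2 * τ ^ 2) / (2 * τ) * (c3 κ τ p (lie X Y p) * c2 κ τ p (Z p))) • E1 κ τ p :=
    rfl
  have hT2 : nablaL κ τ X (nablaL κ τ Y Z) p =
      (fderiv ℝ (fun q => c1 κ τ q (nablaL κ τ Y Z q)) p (X p)) • E1 κ τ p
        + (fderiv ℝ (fun q => c2 κ τ q (nablaL κ τ Y Z q)) p (X p)) • E2 κ τ p
        + (fderiv ℝ (fun q => c3 κ τ q (nablaL κ τ Y Z q)) p (X p)) • E3
        - (τ * c2 κ τ p (X p) * c3 κ τ p (nablaL κ τ Y Z p)) • E1 κ τ p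
        + (τ * c1 κ τ p (X p) * c3 κ τ p (nablaL κ τ Y Z p)) • E2 κ τ p
        + (τ * (c1 κ τ p (X p) * c2 κ τ p (nablaL κ τ Y Z p) -
            c2 κ τ p (X p) * c1 κ τ p (nablaL κ τ Y Z p))) • E3
        + ((κ + 2 * τ ^ 2) / (2 * τ) *
            (c3 κ τ p (X p) * c1 κ τ p (nablaL κ τ Y Z p))) • E2 κ τ p
        - ((κ + 2 * τ ^ 2) / (2 * τ) *
            (c3 κ τ p (X p) * c2 κ τ p (nablaL κ τ Y Z p))) • E1 κ τ p := rfl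
  have hT3 : nablaL κ τ Y (nablaL κ τ X Z) p =
      (fderiv ℝ (fun q => c1 κ τ q (nablaL κ τ X Z q)) p (Y p)) • E1 κ τ p
        + (fderiv ℝ (fun q => c2 κ τ q (nablaL κ τ X Z q)) p (Y p)) • E2 κ τ p
        + (fderiv ℝ (fun q => c3 κ τ q (nablaL κ τ X Z q)) p (Y p)) • E3
        - (τ * c2 κ τ p (Y p) * c3 κ τ p (nablaL κ τ X Z p)) • E1 κ τ p
        + (τ * c1 κ τ p (Y p) * c3 κ τ p (nablaL κ τ X Z p)) • E2 κ τ p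
        + (τ * (c1 κ τ p (Y p) * c2 κ τ p (nablaL κ τ X Z p) -
            c2 κ τ p (Y p) * c1 κ τ p (nablaL κ τ X Z p))) • E3
        + ((κ + 2 * τ ^ 2) / (2 * τ) *
            (c3 κ τ p (Y p) * c1 κ τ p (nablaL κ τ X Z p))) • E2 κ τ p
        - ((κ + 2 * τ ^ 2) / (2 * τ) *
            (c3 κ τ p (Y p) * c2 κ τ p (nablaL κ τ X Z p))) • E1 κ τ p := rfl
  rw [hT1, hT2, hT3]
  rw [fderiv_c1_nabla hp hY hZ (X p), fderiv_c2_nabla hp hY hZ (X p),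
    fderiv_c3_nabla hp hY hZ (X p), fderiv_c1_nabla hp hX hZ (Y p),
    fderiv_c2_nabla hp hX hZ (Y p), fderiv_c3_nabla hp hX hZ (Y p),
    coeff_nabla1 Y Z hp, coeff_nabla2 Y Z hp, coeff_nabla3 Y Z hp,
    coeff_nabla1 X Z hp, coeff_nabla2 X Z hp, coeff_nabla3 X Z hp]
  simp only [lie, map_sub, c1_sub, c2_sub, c3_sub]
  rw [bracket1 hτ hp hX hY, bracket2 hτ hp hX hY, bracket3 hp hX hY]
  rw [hs1 (Y p) (X p), hs2 (Y p) (X p), hs3 (Y p) (X p)]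
  simp only [xi_def]
  simp only [gL_frame hp]
  simp only [c1_E3 hp, c2_E3 hp, c3_E3]
  have hXexp : X p = c1 κ τ p (X p) • E1 κ τ p + c2 κ τ p (X p) • E2 κ τ p +
      c3 κ τ p (X p) • E3 := (expand hp (X p)).symm
  have hYexp : Y p = c1 κ τ p (Y p) • E1 κ τ p + c2 κ τ p (Y p) • E2 κ τ p +
      c3 κ τ p (Y p) • E3 := (expand hp (Y p)).symm
  set x1 := c1 κ τ p (X p) with hx1
  set x2 := c2 κ τ p (X p) with hx2
  set x3 := c3 κ τ p (X p) with hx3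
  set y1 := c1 κ τ p (Y p) with hy1
  set y2 := c2 κ τ p (Y p) with hy2
  set y3 := c3 κ τ p (Y p) with hy3
  rw [hXexp, hYexp]
  have hdiv : (κ + 2 * τ ^ 2) / (2 * τ) = κ / (2 * τ) + τ := by
    field_simp
  rw [hdiv]
  set sg := κ / (2 * τ) with hsg
  have hκ2 : κ = 2 * τ * sg := by
    rw [hsg]
    field_simp
  rw [hκ2]
  match_scalars
  · ring
  · ring
  · ring

end
end
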